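/- In general, the complex conjugate of a_{ij} ⋆^f g does not equal ā_{ij} ⋆^f g: there exist real parameters θ₁, θ₂, θ₃ and real-valued smooth (polynomial) functions f, g on ℝ³ and indices i ≠ j such that conj(a_{ij} ⋆^f g) ≠ ā_{ij} ⋆^f g. -/

import Mathlib

noncomputable section

/-- The cyclic permutation σ of {1,2,3} (indexed by `Fin 3`): σ(k) = k+1 mod 3. -/
def sig : Fin 3 → Fin 3 := fun k => k + 1

/-- Partial derivative ∂_k of a function on ℝ³. -/
def pd (k : Fin 3) (f : (Fin 3 → ℝ) → ℂ) : (Fin 3 → ℝ) → ℂ :=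
  fun x => deriv (fun t : ℝ => f (Function.update x k t)) (x k)

/-- Iterated partial derivatives along a list of indices. -/
def pdL (l : List (Fin 3)) (f : (Fin 3 → ℝ) → ℂ) : (Fin 3 → ℝ) → ℂ := l.foldr pd f

/-- The 3-ary star product (f ⋆^g h) = m[exp(𝒫)(f⊗g⊗h)], where
𝒫 = ∑_k (iθ_k/2)(∂_k ⊗ ∂_{σ(k)} ⊗ ∂_{σ²(k)} − ∂_k ⊗ ∂_{σ²(k)} ⊗ ∂_{σ(k)}),
written out by expanding the exponential series: the n-th order term is a sum
over all words `w` of length n in the six summands of 𝒫 (indexed by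
`Fin 3 × Bool`, the Boolean recording the sign), divided by n!. -/
def star3 (θ : Fin 3 → ℝ) (f g h : (Fin 3 → ℝ) → ℂ) : (Fin 3 → ℝ) → ℂ :=
  fun x => ∑' n : ℕ, (1 / n.factorial : ℂ) *
    ∑ w : Fin n → Fin 3 × Bool,
      (∏ i, (if (w i).2 then 1 else -1) * (Complex.I * (θ (w i).1) / 2)) *
      (pdL (List.ofFn fun i => (w i).1) f x) *
      (pdL (List.ofFn fun i => if (w i).2 then sig (w i).1 else sig (sig (w i).1)) g x) *
      (pdL (List.ofFn fun i => if (w i).2 then sig (sig (w i).1) else sig (w i).1) h x)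

/-- The k-th coordinate function on ℝ³, viewed as complex valued. -/
def X (k : Fin 3) : (Fin 3 → ℝ) → ℂ := fun x => (x k : ℂ)

/-- The complex coordinate a_{kl} = (x_k + i x_l)/√2 on ℝ³. -/
def aC (k l : Fin 3) : (Fin 3 → ℝ) → ℂ :=
  fun x => ((x k : ℂ) + Complex.I * (x l : ℂ)) / Real.sqrt 2

/-- The conjugate complex coordinate ā_{kl} = (x_k − i x_l)/√2 on ℝ³. -/
def aCbar (k l : Fin 3) : (Fin 3 → ℝ) → ℂ :=
  fun x => ((x k : ℂ) - Complex.I * (x l : ℂ)) / Real.sqrt 2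

lemma pd_const (k : Fin 3) (c : ℂ) : pd k (fun _ => c) = fun _ => 0 := by
  funext x; simp [pd]

lemma hdR (x : ℝ) : HasDerivAt (fun t : ℝ => (t : ℂ)) 1 x := by
  simpa using (hasDerivAt_id x).ofReal_comp

lemma pd_X (k m : Fin 3) : pd k (X m) = fun _ => if k = m then 1 else 0 := by
  funext x
  unfold pd X
  by_cases h : k = m
  · subst h
    simp only [Function.update_self, if_pos rfl]
    exact (hdR (x k)).deriv
  · rw [if_neg h]
    have : ∀ t : ℝ, Function.update x k t m = x m := fun t =>
      Function.update_of_ne (Ne.symm h) _ _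
    simp [this]

def ca : Fin 3 → ℂ := ![(Real.sqrt 2 : ℂ)⁻¹, Complex.I * (Real.sqrt 2 : ℂ)⁻¹, 0]

lemma pd_aC (k : Fin 3) : pd k (aC 0 1) = fun _ => ca k := by
  funext x
  fin_cases k
  · unfold pd aC
    have h : ∀ t : ℝ, Function.update x 0 t 1 = x 1 := fun t =>
      Function.update_of_ne (by decide) _ _
    simp only [Function.update_self, h]
    have := ((hdR (x 0)).add_const
      (Complex.I * (x 1 : ℂ))).div_const ((Real.sqrt 2 : ℝ) : ℂ)
    simpa [ca, div_eq_mul_inv] using this.deriv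
  · unfold pd aC
    have h : ∀ t : ℝ, Function.update x 1 t 0 = x 0 := fun t =>
      Function.update_of_ne (by decide) _ _
    simp only [Function.update_self, h]
    have := (((hdR (x 1)).const_mul
      Complex.I).const_add ((x 0 : ℝ) : ℂ)).div_const ((Real.sqrt 2 : ℝ) : ℂ)
    simpa [ca, div_eq_mul_inv] using this.deriv
  · unfold pd aC
    have h0 : ∀ t : ℝ, Function.update x 2 t 0 = x 0 := fun t =>
      Function.update_of_ne (by decide) _ _
    have h1 : ∀ t : ℝ, Function.update x 2 t 1 = x 1 := fun t =>
      Function.update_of_ne (by decide) _ _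
    simp [h0, h1, ca]

def cab : Fin 3 → ℂ := ![(Real.sqrt 2 : ℂ)⁻¹, -(Complex.I * (Real.sqrt 2 : ℂ)⁻¹), 0]

lemma pd_aCbar (k : Fin 3) : pd k (aCbar 0 1) = fun _ => cab k := by
  funext x
  fin_cases k
  · unfold pd aCbar
    have h : ∀ t : ℝ, Function.update x 0 t 1 = x 1 := fun t =>
      Function.update_of_ne (by decide) _ _
    simp only [Function.update_self, h]
    have := ((hdR (x 0)).sub_const
      (Complex.I * (x 1 : ℂ))).div_const ((Real.sqrt 2 : ℝ) : ℂ)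
    simpa [cab, div_eq_mul_inv] using this.deriv
  · unfold pd aCbar
    have h : ∀ t : ℝ, Function.update x 1 t 0 = x 0 := fun t =>
      Function.update_of_ne (by decide) _ _
    simp only [Function.update_self, h]
    have := ((((hdR (x 1)).const_mul
      Complex.I).const_sub ((x 0 : ℝ) : ℂ))).div_const ((Real.sqrt 2 : ℝ) : ℂ)
    simpa [cab, div_eq_mul_inv, neg_mul] using this.deriv
  · unfold pd aCbar
    have h0 : ∀ t : ℝ, Function.update x 2 t 0 = x 0 := fun t =>
      Function.update_of_ne (by decide) _ _
    have h1 : ∀ t : ℝ, Function.update x 2 t 1 = x 1 := fun t =>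
      Function.update_of_ne (by decide) _ _
    simp [h0, h1, cab]

lemma pdL_cons (k : Fin 3) (l : List (Fin 3)) (f : (Fin 3 → ℝ) → ℂ) :
    pdL (k :: l) f = pd k (pdL l f) := rfl

lemma pdL_cons_const {A : (Fin 3 → ℝ) → ℂ} (hA : ∀ k, ∃ c, pd k A = fun _ => c) :
    ∀ (l : List (Fin 3)) (k : Fin 3), ∃ c, pdL (k :: l) A = fun _ => c := by
  intro l
  induction l with
  | nil => intro k; exact hA k
  | cons k' l ih =>
      intro k
      obtain ⟨c, hc⟩ := ih k'
      refine ⟨0, ?_⟩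
      rw [pdL_cons, pdL_cons] at *
      rw [hc, pd_const]

lemma pdL_len2 {A : (Fin 3 → ℝ) → ℂ} (hA : ∀ k, ∃ c, pd k A = fun _ => c)
    (l : List (Fin 3)) (h : 2 ≤ l.length) : pdL l A = fun _ => 0 := by
  match l with
  | k :: k' :: l' =>
      obtain ⟨c, hc⟩ := pdL_cons_const hA l' k'
      rw [pdL_cons, hc, pd_const]

lemma star3_val (A : (Fin 3 → ℝ) → ℂ) (cA : Fin 3 → ℂ)
    (hA0 : A (fun _ => 0) = 0) (hpd : ∀ k, pd k A = fun _ => cA k) :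
    star3 ![0,1,0] A (X 2) (X 0) (fun _ => 0) = (Complex.I / 2) * cA 1 := by
  have hAconst : ∀ k, ∃ c, pd k A = fun _ => c := fun k => ⟨cA k, hpd k⟩
  unfold star3
  have hother : ∀ n : ℕ, n ≠ 1 → (1 / n.factorial : ℂ) *
      (∑ w : Fin n → Fin 3 × Bool,
        (∏ i, (if (w i).2 then 1 else -1) * (Complex.I * ((![0,1,0] : Fin 3 → ℝ) (w i).1) / 2)) *
        (pdL (List.ofFn fun i => (w i).1) A (fun _ => 0)) *
        (pdL (List.ofFn fun i => if (w i).2 then sig (w i).1 else sig (sig (w i).1)) (X 2) (fun _ => 0)) *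
        (pdL (List.ofFn fun i => if (w i).2 then sig (sig (w i).1) else sig (w i).1) (X 0) (fun _ => 0))) = 0 := by
    intro n hn
    match n, hn with
    | 0, _ =>
        rw [Finset.sum_eq_zero]
        · ring
        · intro w _
          have : pdL (List.ofFn fun i : Fin 0 => (w i).1) A (fun _ => 0) = 0 := by
            simp [List.ofFn_zero, pdL, hA0]
          rw [this]; ring
    | (n+2), _ =>
        rw [Finset.sum_eq_zero]
        · ring
        · intro w _
          rw [pdL_len2 hAconst _ (by simp)]
          ring
  rw [tsum_eq_single 1 hother]
  have hsum : ∀ (F : (Fin 1 → Fin 3 × Bool) → ℂ), ∑ w, F w = ∑ p : Fin 3 × Bool, F (fun _ => p) :=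
    fun F => (Fintype.sum_equiv (Equiv.funUnique (Fin 1) (Fin 3 × Bool)).symm
      (fun p => F (fun _ => p)) F (fun p => rfl)).symm
  rw [hsum]
  have hl : ∀ (f : Fin 1 → Fin 3), List.ofFn f = [f 0] := fun f => by
    simp [List.ofFn_succ]
  simp only [hl, Fin.prod_univ_one, pdL_cons]
  show ((1 : ℂ)/(1:ℕ).factorial) * ∑ p : Fin 3 × Bool, _ = _
  rw [Fintype.sum_prod_type]
  rw [Fin.sum_univ_three]
  simp only [Fintype.sum_bool]
  have e0 : sig 0 = 1 := rfl
  have e1 : sig 1 = 2 := rfl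
  have e2 : sig 2 = 0 := rfl
  simp only [pdL, List.foldr, e0, e1, e2, if_true, if_false, hpd, pd_X,
    Matrix.cons_val_zero, Matrix.cons_val_one, Matrix.head_cons, Matrix.cons_val_two,
    Matrix.head_fin_const, Bool.cond_true]
  norm_num
  intro h
  exact absurd h (by decide)

lemma contDiff_X (k : Fin 3) : ContDiff ℝ (⊤ : ℕ∞) (X k) :=
  Complex.ofRealCLM.contDiff.comp (ContinuousLinearMap.proj (R := ℝ) (φ := fun _ : Fin 3 => ℝ) k).contDiff


/-- in general conj(a_{ij} ⋆^f g) ≠ ā_{ij} ⋆^f g: there is a witness with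
real-valued smooth (polynomial) f, g. -/
theorem star3_conj_fails :
    ∃ (θ : Fin 3 → ℝ) (f g : (Fin 3 → ℝ) → ℂ) (i j : Fin 3), i ≠ j ∧
      ContDiff ℝ (⊤ : ℕ∞) f ∧ ContDiff ℝ (⊤ : ℕ∞) g ∧
      (∀ x, (f x).im = 0) ∧ (∀ x, (g x).im = 0) ∧
      ∃ x, (starRingEnd ℂ) (star3 θ (aC i j) f g x) ≠ star3 θ (aCbar i j) f g x := by
  refine ⟨![0,1,0], X 2, X 0, 0, 1, by decide, contDiff_X 2, contDiff_X 0,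
    fun x => by simp [X], fun x => by simp [X], fun _ => 0, ?_⟩
  have h1 : star3 ![0,1,0] (aC 0 1) (X 2) (X 0) (fun _ => 0) = (Complex.I / 2) * ca 1 :=
    star3_val _ _ (by simp [aC]) pd_aC
  have h2 : star3 ![0,1,0] (aCbar 0 1) (X 2) (X 0) (fun _ => 0) = (Complex.I / 2) * cab 1 :=
    star3_val _ _ (by simp [aCbar]) pd_aCbar
  rw [h1, h2]
  have e1 : (Complex.I / 2) * ca 1 = (↑(-((Real.sqrt 2)⁻¹ / 2)) : ℂ) := by
    simp [ca, Complex.ext_iff]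
    ring
  have e2 : (Complex.I / 2) * cab 1 = (↑((Real.sqrt 2)⁻¹ / 2) : ℂ) := by
    simp [cab, Complex.ext_iff]
    ring
  rw [e1, e2, Complex.conj_ofReal]
  intro h
  rw [Complex.ofReal_inj] at h
  have hs : (0:ℝ) < (Real.sqrt 2)⁻¹ := by positivity
  linarith
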